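/- Two probabilistically equivalent models T₁x = v and T₂y = w are algebraically equivalent (x = y) if and only if T₂' P₂⁻¹ w = T₁' P₁⁻¹ v. -/
import Mathlib


open Matrix

/-- Two probabilistically equivalent models `T₁ x = v` and `T₂ y = w`
(`T₂ᵀ P₂⁻¹ T₂ = T₁ᵀ P₁⁻¹ T₁`, with `x = T₁⁻¹ v`, `y = T₂⁻¹ w`) are algebraically
equivalent (`x = y`) if and only if `T₂ᵀ P₂⁻¹ w = T₁ᵀ P₁⁻¹ v`. -/
theorem algebraically_equivalent_iff_noise_relation {n : ℕ}
    (T₁ T₂ P₁ P₂ : Matrix (Fin n) (Fin n) ℝ)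
    (hP₁ : P₁.PosDef) (hP₂ : P₂.PosDef)
    (hT₁ : IsUnit T₁.det) (hT₂ : IsUnit T₂.det)
    (hPE : T₂ᵀ * P₂⁻¹ * T₂ = T₁ᵀ * P₁⁻¹ * T₁)
    (v w x y : Fin n → ℝ)
    (hx : x = T₁⁻¹.mulVec v) (hy : y = T₂⁻¹.mulVec w) :
    x = y ↔ (T₂ᵀ * P₂⁻¹).mulVec w = (T₁ᵀ * P₁⁻¹).mulVec v := by
  have hP₁u : IsUnit P₁.det := isUnit_iff_ne_zero.mpr (ne_of_gt hP₁.det_pos)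
  have hP₂u : IsUnit P₂.det := isUnit_iff_ne_zero.mpr (ne_of_gt hP₂.det_pos)
  have hM : IsUnit (T₁ᵀ * P₁⁻¹ * T₁).det := by
    rw [det_mul, det_mul, det_transpose, det_nonsing_inv]
    rw [Ring.inverse_eq_inv']
    exact (hT₁.mul hP₁u.inv).mul hT₁
  have hw : (T₂ᵀ * P₂⁻¹).mulVec w = (T₁ᵀ * P₁⁻¹ * T₁).mulVec y := by
    rw [hy, ← hPE, mulVec_mulVec, Matrix.mul_assoc, Matrix.mul_assoc,
      mul_nonsing_inv _ hT₂, Matrix.mul_one]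
  have hv : (T₁ᵀ * P₁⁻¹).mulVec v = (T₁ᵀ * P₁⁻¹ * T₁).mulVec x := by
    rw [hx, mulVec_mulVec, Matrix.mul_assoc, mul_nonsing_inv _ hT₁, Matrix.mul_one]
  rw [hw, hv]
  constructor
  · intro h; rw [h]
  · intro h
    have := congrArg ((T₁ᵀ * P₁⁻¹ * T₁)⁻¹.mulVec) h
    simpa [mulVec_mulVec, nonsing_inv_mul _ hM] using this.symm
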